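/- Let H be the 7×7 toy matrix at g = 2, let J be the 7×7 block-diagonal matrix diag(J₄(7), J₃(7)) consisting of a 4×4 and a 3×3 Jordan block with eigenvalue 7, and let Q be the 7×7 matrix given in the context. Then det(Q) ≠ 0 and H·Q = Q·J. -/

import Mathlib

open Matrix Real

noncomputable def H16 : Matrix (Fin 7) (Fin 7) ℝ :=
  !![1, 0, 2 * Real.sqrt 3, 0, 0, 0, 0;
     0, 3, 0, 2 * Real.sqrt 2, 0, 0, 0;
     -(2 * Real.sqrt 3), 0, 5, 0, 4, 0, 0;
     0, -(2 * Real.sqrt 2), 0, 7, 0, 2 * Real.sqrt 2, 0;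
     0, 0, -4, 0, 9, 0, 2 * Real.sqrt 3;
     0, 0, 0, -(2 * Real.sqrt 2), 0, 11, 0;
     0, 0, 0, 0, -(2 * Real.sqrt 3), 0, 13]

noncomputable def J16 : Matrix (Fin 7) (Fin 7) ℝ :=
  !![7, 1, 0, 0, 0, 0, 0;
     0, 7, 1, 0, 0, 0, 0;
     0, 0, 7, 1, 0, 0, 0;
     0, 0, 0, 7, 0, 0, 0;
     0, 0, 0, 0, 7, 1, 0;
     0, 0, 0, 0, 0, 7, 1;
     0, 0, 0, 0, 0, 0, 7]

noncomputable def Q16 : Matrix (Fin 7) (Fin 7) ℝ :=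
  !![-48, 24, -6, 1, 0, 0, 0;
     0, 8, -4, 1, 8, -4, 1;
     -(48 * Real.sqrt 3), 16 * Real.sqrt 3, -(2 * Real.sqrt 3), 0, 0, 0, 0;
     0, 8 * Real.sqrt 2, -(2 * Real.sqrt 2), 0, 8 * Real.sqrt 2, -(2 * Real.sqrt 2), 0;
     -(48 * Real.sqrt 3), 8 * Real.sqrt 3, 0, 0, 0, 0, 0;
     0, 8, 0, 0, 8, 0, 0;
     -48, 0, 0, 0, 0, 0, 0]

/-!
The columns of `Q16` are two Jordan chains of `H16` for the eigenvalue `7`, of lengths 4 and 3,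
which is what `H16 * Q16 = Q16 * J16` says column by column. Reading the rows of `Q16` in the
order 6, 4, 2, 0, 5, 3, 1 makes it lower triangular with nonzero diagonal, so its determinant is
a nonzero product up to sign.
-/

theorem Matrix.det_ne_zero_of_isLowerTriangular_submatrix {n R : Type*} [Fintype n]
    [DecidableEq n] [LinearOrder n] [CommRing R] [IsDomain R] (M : Matrix n n R)
    (σ : Equiv.Perm n) (htri : (M.submatrix σ id).IsLowerTriangular)
    (hdiag : ∀ i, M (σ i) i ≠ 0) : M.det ≠ 0 := by
  have hdet : Equiv.Perm.sign σ * M.det = ∏ i, M (σ i) i := by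
    rw [← det_permute, det_of_isLowerTriangular _ htri]
    rfl
  intro h
  rw [h, mul_zero] at hdet
  exact Finset.prod_ne_zero_iff.mpr (fun i _ => hdiag i) hdet.symm

def Q16RowOrder : Equiv.Perm (Fin 7) where
  toFun := ![6, 4, 2, 0, 5, 3, 1]
  invFun := ![3, 6, 2, 5, 1, 4, 0]
  left_inv := by decide
  right_inv := by decide

theorem Q16_submatrix_isLowerTriangular : (Q16.submatrix Q16RowOrder id).IsLowerTriangular := by
  intro i j hij
  rw [OrderDual.toDual_lt_toDual] at hij
  fin_cases i <;> fin_cases j <;> simp_all [Q16, Q16RowOrder]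

theorem Q16_rowOrder_diag_ne_zero (i : Fin 7) : Q16 (Q16RowOrder i) i ≠ 0 := by
  fin_cases i <;> simp [Q16, Q16RowOrder]

theorem H16_mul_Q16 : H16 * Q16 = Q16 * J16 := by
  ext i j
  fin_cases i <;> fin_cases j <;> simp [H16, Q16, J16, mul_apply, Fin.sum_univ_succ] <;>
    ring_nf <;> norm_num

theorem stmt_16 : Q16.det ≠ 0 ∧ H16 * Q16 = Q16 * J16 :=
  ⟨Q16.det_ne_zero_of_isLowerTriangular_submatrix Q16RowOrder Q16_submatrix_isLowerTriangular
    Q16_rowOrder_diag_ne_zero, H16_mul_Q16⟩
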